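/- For real z with |z| ≤ 1 and complex a, the Gauss hypergeometric series satisfies ₂F₁(a, 1−a; 1/2; z) · √(1−z) = cos((2a−1) arcsin √z) whenever 0 ≤ z < 1, where ₂F₁(a,b;c;z) = Σ_{n≥0} (a)_n (b)_n z^n / ((c)_n n!). -/

import Mathlib

open Complex

/-- The Pochhammer symbol (rising factorial) on ℂ. -/
def poch (a : ℂ) : ℕ → ℂ
  | 0 => 1
  | k + 1 => poch a k * (a + k)

/-!
`F = ₂F₁(a, 1 - a; 1/2; ·)` solves the hypergeometric equation
`w (1 - w) F'' + (1/2 - 2w) F' - a (1 - a) F = 0` on the unit disc (compare coefficients). Under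
the substitution `w = sin² θ`, this equation turns `G θ = cos θ · F (sin² θ)` into a solution of
`G'' = -(2a - 1)² G` on `(-π/2, π/2)` with `G 0 = 1`, `G' 0 = 0`, so `G θ = cos ((2a - 1) θ)`.
Take `θ = arcsin √z`.
-/

open FormalMultilinearSeries
open scoped ENNReal

section PowerSeries

variable {𝕜 : Type*} [NontriviallyNormedField 𝕜] {f : 𝕜 → 𝕜} {c : ℕ → 𝕜} {x : 𝕜} {r : ℝ≥0∞}

theorem HasFPowerSeriesOnBall.deriv_ofScalars [CompleteSpace 𝕜]
    (h : HasFPowerSeriesOnBall f (ofScalars 𝕜 c) x r) :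
    HasFPowerSeriesOnBall (deriv f) (ofScalars 𝕜 fun n ↦ (n + 1) * c (n + 1)) x r := by
  convert (ContinuousLinearMap.apply 𝕜 𝕜 (1 : 𝕜)).comp_hasFPowerSeriesOnBall h.fderiv using 1
  · funext y
    simp
  · ext n
    simp

theorem HasFPowerSeriesOnBall.hasSum_ofScalars (h : HasFPowerSeriesOnBall f (ofScalars 𝕜 c) 0 r)
    {y : 𝕜} (hy : ‖y‖ₑ < r) : HasSum (fun n ↦ c n * y ^ n) (f y) := by
  simpa [ofScalars_apply_eq, mul_comm] using h.hasSum (by simpa using hy)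

end PowerSeries

theorem HasSum.mul_pow_of_shift {R : Type*} [NormedRing R] {d e : ℕ → R} {w S : R}
    (h : HasSum (fun n ↦ e n * w ^ n) S) (hde : ∀ n, d (n + 1) = e n) :
    HasSum (fun n ↦ d n * w ^ n) (d 0 + S * w) := by
  refine (hasSum_nat_add_iff' 1).mp ?_
  simpa [hde, pow_succ, mul_assoc] using h.mul_right w

section Hypergeometric

variable {𝕂 : Type*} [RCLike 𝕂] (a b c : 𝕂)

theorem one_le_ordinaryHypergeometricSeries_radius (𝔸 : Type*) [NormedDivisionRing 𝔸]
    [NormedAlgebra 𝕂 𝔸] : 1 ≤ (ordinaryHypergeometricSeries 𝔸 a b c).radius := by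
  by_cases habc : ∀ k : ℕ, (k : 𝕂) ≠ -a ∧ (k : 𝕂) ≠ -b ∧ (k : 𝕂) ≠ -c
  · exact (ordinaryHypergeometricSeries_radius_eq_one 𝔸 a b c habc).ge
  push Not at habc
  obtain ⟨k, hk⟩ := habc
  by_cases ha : (k : 𝕂) = -a
  · rw [← neg_neg a, ← ha, ordinaryHypergeometric_radius_top_of_neg_nat₁]
    exact le_top
  by_cases hb : (k : 𝕂) = -b
  · rw [← neg_neg b, ← hb, ordinaryHypergeometric_radius_top_of_neg_nat₂]
    exact le_top
  rw [← neg_neg c, ← hk ha hb, ordinaryHypergeometric_radius_top_of_neg_nat₃]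
  exact le_top

theorem hasFPowerSeriesOnBall_ordinaryHypergeometric :
    HasFPowerSeriesOnBall (₂F₁ a b c) (ofScalars 𝕂 (ordinaryHypergeometricCoefficient a b c)) 0 1 :=
  ((ordinaryHypergeometricSeries 𝕂 a b c).hasFPowerSeriesOnBall
    (zero_lt_one.trans_le (one_le_ordinaryHypergeometricSeries_radius a b c 𝕂))).mono
    zero_lt_one (one_le_ordinaryHypergeometricSeries_radius a b c 𝕂)

theorem analyticAt_ordinaryHypergeometric {w : 𝕂} (hw : ‖w‖ < 1) :
    AnalyticAt 𝕂 (₂F₁ a b c) w :=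
  (hasFPowerSeriesOnBall_ordinaryHypergeometric a b c).analyticAt_of_mem
    (by simpa [enorm_eq_nnnorm, ← NNReal.coe_lt_one] using hw)

variable {c}

theorem ordinaryHypergeometricCoefficient_succ (hc : ∀ k : ℕ, (k : 𝕂) ≠ -c) (n : ℕ) :
    (n + 1) * (c + n) * ordinaryHypergeometricCoefficient a b c (n + 1) =
      (a + n) * (b + n) * ordinaryHypergeometricCoefficient a b c n := by
  have hpoch : (ascPochhammer 𝕂 n).eval c ≠ 0 :=
    (ascPochhammer_eval_eq_zero_iff n c).not.2 (by push Not; exact fun k _ ↦ hc k)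
  have hcn : c + n ≠ 0 := fun h ↦ hc n (by linear_combination h)
  simp only [ordinaryHypergeometricCoefficient, Nat.factorial_succ, Nat.cast_mul,
    ascPochhammer_succ_eval]
  field_simp
  push_cast
  ring

theorem ordinaryHypergeometric_ode (hc : ∀ k : ℕ, (k : 𝕂) ≠ -c) {w : 𝕂} (hw : ‖w‖ < 1) :
    w * (1 - w) * deriv (deriv (₂F₁ a b c)) w + (c - (a + b + 1) * w) * deriv (₂F₁ a b c) w
      - a * b * ₂F₁ a b c w = 0 := by
  set h := ordinaryHypergeometricCoefficient a b c
  have hser := hasFPowerSeriesOnBall_ordinaryHypergeometric a b c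
  have hw' : ‖w‖ₑ < 1 := by simpa [enorm_eq_nnnorm, ← NNReal.coe_lt_one] using hw
  have hF : HasSum (fun n ↦ h n * w ^ n) (₂F₁ a b c w) := hser.hasSum_ofScalars hw'
  have hF' := hser.deriv_ofScalars.hasSum_ofScalars hw'
  have hF'' := hser.deriv_ofScalars.deriv_ofScalars.hasSum_ofScalars hw'
  have hwF' : HasSum (fun n ↦ (n * h n) * w ^ n) (deriv (₂F₁ a b c) w * w) := by
    simpa using hF'.mul_pow_of_shift (d := fun n : ℕ ↦ n * h n) (fun n ↦ by push_cast; ring)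
  have hwF'' : HasSum (fun n ↦ (n * (n + 1) * h (n + 1)) * w ^ n)
      (deriv (deriv (₂F₁ a b c)) w * w) := by
    simpa using hF''.mul_pow_of_shift (d := fun n : ℕ ↦ n * (n + 1) * h (n + 1))
      (fun n ↦ by push_cast; ring)
  have hwwF'' : HasSum (fun n ↦ ((n - 1) * n * h n) * w ^ n)
      (deriv (deriv (₂F₁ a b c)) w * w * w) := by
    simpa using hwF''.mul_pow_of_shift (d := fun n : ℕ ↦ (n - 1) * n * h n)
      (fun n ↦ by push_cast; ring)
  -- `w F'' + c F'` and `w² F'' + (a + b + 1) w F' + a b F` have the `n`-th coefficients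
  -- `(n + 1) (n + c) h (n + 1)` and `(n + a) (n + b) h n`, equal by the recurrence.
  have := (hwF''.add (hF'.mul_left c)).unique
    ((hwwF''.add (hwF'.mul_left (a + b + 1))).add (hF.mul_left (a * b)) |>.congr_fun fun n ↦ by
      linear_combination w ^ n * ordinaryHypergeometricCoefficient_succ a b hc n)
  linear_combination this

end Hypergeometric

theorem IsOpen.eq_of_hasDerivAt_zero {s : Set ℝ} (hs : IsOpen s) (hs' : IsPreconnected s)
    {g : ℝ → ℂ} (hg : ∀ t ∈ s, HasDerivAt g 0 t) {x y : ℝ} (hx : x ∈ s) (hy : y ∈ s) :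
    g x = g y :=
  hs.is_const_of_deriv_eq_zero hs' (fun t ht ↦ (hg t ht).differentiableAt.differentiableWithinAt)
    (fun t ht ↦ (hg t ht).deriv) hx hy

theorem eqOn_cos_of_hasDerivAt {μ : ℂ} {s : Set ℝ} (hs : IsOpen s) (hs' : IsPreconnected s)
    (h0 : 0 ∈ s) {y y' : ℝ → ℂ} (hy : ∀ t ∈ s, HasDerivAt y (y' t) t)
    (hy' : ∀ t ∈ s, HasDerivAt y' (-μ ^ 2 * y t) t) (hy0 : y 0 = 1) (hy'0 : y' 0 = 0) :
    s.EqOn y fun t ↦ cos (μ * t) := by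
  have hcos (t : ℝ) : HasDerivAt (fun t : ℝ ↦ cos (μ * t)) (-sin (μ * t) * μ) t := by
    simpa using ((hasDerivAt_id (t : ℂ)).const_mul μ).ccos.comp_ofReal
  have hsin (t : ℝ) : HasDerivAt (fun t : ℝ ↦ sin (μ * t)) (cos (μ * t) * μ) t := by
    simpa using ((hasDerivAt_id (t : ℂ)).const_mul μ).csin.comp_ofReal
  -- two first integrals of `y'' = -μ² y`; together they determine `y'`
  have hq : ∀ t ∈ s, y' t * cos (μ * t) + μ * y t * sin (μ * t) = 0 := fun t ht ↦ by
    simpa [hy0, hy'0] using hs.eq_of_hasDerivAt_zero hs' (fun u hu ↦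
      (((hy' u hu).fun_mul (hcos u)).fun_add
        (((hy u hu).const_mul μ).fun_mul (hsin u))).congr_deriv (by ring)) ht h0
  have hr : ∀ t ∈ s, y' t * sin (μ * t) - μ * y t * cos (μ * t) = -μ := fun t ht ↦ by
    simpa [hy0, hy'0] using hs.eq_of_hasDerivAt_zero hs' (fun u hu ↦
      (((hy' u hu).fun_mul (hsin u)).fun_sub
        (((hy u hu).const_mul μ).fun_mul (hcos u))).congr_deriv (by ring)) ht h0
  have hy'_eq : ∀ t ∈ s, y' t = -sin (μ * t) * μ := fun t ht ↦ by
    linear_combination cos (μ * t) * hq t ht + sin (μ * t) * hr t ht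
      - y' t * sin_sq_add_cos_sq (μ * t)
  intro t ht
  simpa [hy0, sub_eq_zero] using hs.eq_of_hasDerivAt_zero hs' (fun u hu ↦
    ((hy u hu).fun_sub (hcos u)).congr_deriv (by rw [hy'_eq u hu, sub_self])) ht h0

theorem HasDerivAt.comp_sin_sq {f : ℂ → ℂ} {f' : ℂ} {θ : ℝ}
    (hf : HasDerivAt f f' ↑(Real.sin θ ^ 2)) :
    HasDerivAt (fun t : ℝ ↦ f ↑(Real.sin t ^ 2)) (f' * ↑(2 * Real.sin θ * Real.cos θ)) θ :=
  (hf.comp θ ((Real.hasDerivAt_sin θ).fun_pow 2).ofReal_comp).congr_deriv (by push_cast; ring)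

section TrigSubstitution

variable (a : ℂ)

noncomputable def hypergeomCos (θ : ℝ) : ℂ :=
  Real.cos θ * ₂F₁ a (1 - a) (1 / 2 : ℂ) ↑(Real.sin θ ^ 2)

noncomputable def hypergeomCosDeriv (θ : ℝ) : ℂ :=
  Real.sin θ * (2 * Real.cos θ ^ 2 * deriv (₂F₁ a (1 - a) (1 / 2 : ℂ)) ↑(Real.sin θ ^ 2)
    - ₂F₁ a (1 - a) (1 / 2 : ℂ) ↑(Real.sin θ ^ 2))

variable {a} {θ : ℝ}

theorem norm_sin_sq_lt_one (hθ : θ ∈ Set.Ioo (-(Real.pi / 2)) (Real.pi / 2)) :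
    ‖((Real.sin θ ^ 2 : ℝ) : ℂ)‖ < 1 := by
  rw [Complex.norm_real, Real.norm_of_nonneg (sq_nonneg _)]
  nlinarith [Real.sin_sq_add_cos_sq θ, Real.cos_pos_of_mem_Ioo hθ]

theorem hasDerivAt_hypergeomCos (hθ : θ ∈ Set.Ioo (-(Real.pi / 2)) (Real.pi / 2)) :
    HasDerivAt (hypergeomCos a) (hypergeomCosDeriv a θ) θ := by
  have hF := (analyticAt_ordinaryHypergeometric a (1 - a) (1 / 2)
    (norm_sin_sq_lt_one hθ)).differentiableAt.hasDerivAt.comp_sin_sq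
  exact ((Real.hasDerivAt_cos θ).ofReal_comp.fun_mul hF).congr_deriv
    (by simp only [hypergeomCosDeriv]; push_cast; ring)

theorem hasDerivAt_hypergeomCosDeriv (hθ : θ ∈ Set.Ioo (-(Real.pi / 2)) (Real.pi / 2)) :
    HasDerivAt (hypergeomCosDeriv a) (-(2 * a - 1) ^ 2 * hypergeomCos a θ) θ := by
  have hw := norm_sin_sq_lt_one hθ
  have hF := analyticAt_ordinaryHypergeometric a (1 - a) (1 / 2) hw
  have hF0 := hF.differentiableAt.hasDerivAt.comp_sin_sq
  have hF1 := hF.deriv.differentiableAt.hasDerivAt.comp_sin_sq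
  have hc : ∀ k : ℕ, (k : ℂ) ≠ -(1 / 2) := fun k hk ↦ by
    have := congrArg re hk
    norm_num at this
    linarith [k.cast_nonneg (α := ℝ)]
  have hode := ordinaryHypergeometric_ode a (1 - a) hc hw
  have hsin := (Real.hasDerivAt_sin θ).ofReal_comp
  have hcos := (Real.hasDerivAt_cos θ).ofReal_comp
  refine (hsin.fun_mul (((hcos.fun_pow 2).const_mul 2).fun_mul hF1 |>.fun_sub hF0)).congr_deriv ?_
  simp only [hypergeomCos]
  push_cast at hode ⊢
  set F : ℂ → ℂ := ₂F₁ a (1 - a) (1 / 2)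
  linear_combination (4 * cos (θ : ℂ)) * hode + 2 * cos (θ : ℂ) *
    (deriv F (sin θ ^ 2) + 2 * sin (θ : ℂ) ^ 2 * deriv (deriv F) (sin θ ^ 2)) *
      sin_sq_add_cos_sq (θ : ℂ)

end TrigSubstitution

theorem poch_eq_ascPochhammer_eval (a : ℂ) (n : ℕ) : poch a n = (ascPochhammer ℂ n).eval a := by
  induction n with
  | zero => simp [poch]
  | succ n ih => rw [poch, ih, ascPochhammer_succ_eval]

theorem tsum_poch_eq_ordinaryHypergeometric (a b c z : ℂ) :
    ∑' n : ℕ, poch a n * poch b n * z ^ n / (poch c n * n.factorial) = ₂F₁ a b c z := by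
  rw [ordinaryHypergeometric_eq_tsum]
  refine tsum_congr fun n ↦ ?_
  simp only [poch_eq_ascPochhammer_eval, smul_eq_mul]
  ring

theorem hypergeom_cos (a : ℂ) (z : ℝ) (hz0 : 0 ≤ z) (hz1 : z < 1) :
    (∑' n : ℕ, poch a n * poch (1 - a) n * (z : ℂ) ^ n /
        (poch (1 / 2) n * Nat.factorial n)) * (Real.sqrt (1 - z) : ℂ) =
      Complex.cos ((2 * a - 1) * Real.arcsin (Real.sqrt z)) := by
  have hsqrt : Real.sqrt z < 1 := (Real.sqrt_lt' one_pos).2 (by simpa using hz1)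
  have hθ : Real.arcsin (Real.sqrt z) ∈ Set.Ioo (-(Real.pi / 2)) (Real.pi / 2) :=
    ⟨Real.neg_pi_div_two_lt_arcsin.2 (by linarith [Real.sqrt_nonneg z]),
      Real.arcsin_lt_pi_div_two.2 hsqrt⟩
  have hsin : Real.sin (Real.arcsin (Real.sqrt z)) ^ 2 = z := by
    rw [Real.sin_arcsin (by linarith [Real.sqrt_nonneg z]) hsqrt.le, Real.sq_sqrt hz0]
  have hcos : Real.cos (Real.arcsin (Real.sqrt z)) = Real.sqrt (1 - z) := by
    rw [Real.cos_arcsin, Real.sq_sqrt hz0]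
  have h0 : (0 : ℝ) ∈ Set.Ioo (-(Real.pi / 2)) (Real.pi / 2) := by
    constructor <;> linarith [Real.pi_pos]
  have key := eqOn_cos_of_hasDerivAt isOpen_Ioo isPreconnected_Ioo h0
    (fun _ ↦ hasDerivAt_hypergeomCos (a := a)) (fun _ ↦ hasDerivAt_hypergeomCosDeriv)
    (by simp [hypergeomCos]) (by simp [hypergeomCosDeriv]) hθ
  rw [hypergeomCos, hsin, hcos] at key
  rw [tsum_poch_eq_ordinaryHypergeometric, mul_comm, key]
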